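/- arXiv:1607.04105 — 3 statements merged into one kernel-verified Lean document; each statement's English description precedes it below -/
import Mathlib

section
/- Let L be a locally compact Hausdorff space. The Banach space C₀(L, ℂ) is almost transitive if and only if it is both almost positive transitive and admits almost polar decompositions. -/
open ZeroAtInfty

/-- The pointwise absolute value (as a complex-valued function) of an element
of `C₀(L, ℂ)`. -/
noncomputable def absC0 {L : Type*} [TopologicalSpace L] (f : C₀(L, ℂ)) : C₀(L, ℂ) where
  toFun := fun x => (‖f x‖ : ℂ)
  continuous_toFun := Complex.continuous_ofReal.comp (f.continuous.norm)
  zero_at_infty' := by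
    have h := zero_at_infty f
    have hc : Filter.Tendsto (fun z : ℂ => ((‖z‖ : ℝ) : ℂ)) (nhds 0) (nhds 0) := by
      exact ((Complex.continuous_ofReal.comp continuous_norm).tendsto (0 : ℂ)).mono_right
        (le_of_eq (by simp))
    exact hc.comp h

/-- `C₀(L, ℂ)` is almost transitive. -/
def AlmostTransitiveC0 (L : Type*) [TopologicalSpace L] : Prop :=
  ∀ ε > (0 : ℝ), ∀ f g : C₀(L, ℂ), ‖f‖ = 1 → ‖g‖ = 1 →
    ∃ T : C₀(L, ℂ) ≃ₗᵢ[ℂ] C₀(L, ℂ), ‖T f - g‖ < ε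

/-- `C₀(L, ℂ)` is almost positive transitive: unit vectors that are pointwise
nonnegative real can be approximately mapped to each other by surjective linear
isometries. -/
def AlmostPositiveTransitiveC0 (L : Type*) [TopologicalSpace L] : Prop :=
  ∀ ε > (0 : ℝ), ∀ f g : C₀(L, ℂ), ‖f‖ = 1 → ‖g‖ = 1 →
    (∀ x, (f x).im = 0 ∧ 0 ≤ (f x).re) → (∀ x, (g x).im = 0 ∧ 0 ≤ (g x).re) →
    ∃ T : C₀(L, ℂ) ≃ₗᵢ[ℂ] C₀(L, ℂ), ‖T f - g‖ < ε

/-- `C₀(L, ℂ)` admits almost polar decompositions. -/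
noncomputable def AdmitsAlmostPolarDecompositionsC0 (L : Type*) [TopologicalSpace L] : Prop :=
  ∀ ε > (0 : ℝ), ∀ f : C₀(L, ℂ),
    ∃ T : C₀(L, ℂ) ≃ₗᵢ[ℂ] C₀(L, ℂ), ‖T (absC0 f) - f‖ < ε

/-!
Since `|f|` is a nonnegative function of the same norm as `f`, almost transitivity gives both
properties at once (after rescaling to the unit sphere). Conversely, polar decompositions give
isometries with `T₁ |f| ≈ f` and `T₂ |g| ≈ g`, positive transitivity one with `S |f| ≈ |g|`, and
then `T₂ ∘ S ∘ T₁⁻¹` moves `f` to within `ε` of `g`.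
-/

@[simp]
lemma absC0_apply {L : Type*} [TopologicalSpace L] (f : C₀(L, ℂ)) (x : L) :
    absC0 f x = (‖f x‖ : ℂ) :=
  rfl

lemma norm_absC0 {L : Type*} [TopologicalSpace L] (f : C₀(L, ℂ)) : ‖absC0 f‖ = ‖f‖ := by
  simp only [← ZeroAtInftyContinuousMap.norm_toBCF_eq_norm,
    BoundedContinuousFunction.norm_eq_iSup_norm]
  simp

lemma LinearIsometryEquiv.dist_trans_symm_trans_le {R E : Type*} [Semiring R]
    [SeminormedAddCommGroup E] [Module R E] (T₁ S T₂ : E ≃ₗᵢ[R] E) (x a b y : E) :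
    dist ((T₁.symm.trans S).trans T₂ x) y ≤ dist (T₁ a) x + dist (S a) b + dist (T₂ b) y :=
  calc dist ((T₁.symm.trans S).trans T₂ x) y
      ≤ dist (T₂ (S (T₁.symm x))) (T₂ (S a)) + dist (T₂ (S a)) (T₂ b) + dist (T₂ b) y :=
        dist_triangle4 _ _ _ _
    _ = dist (T₁ a) x + dist (S a) b + dist (T₂ b) y := by
        rw [T₂.dist_map, T₂.dist_map, S.dist_map, dist_comm, ← T₁.dist_map, T₁.apply_symm_apply]

lemma exists_linearIsometryEquiv_norm_apply_sub_lt_of_norm_eq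
    {𝕜 E : Type*} [RCLike 𝕜] [NormedAddCommGroup E] [NormedSpace 𝕜 E]
    (h : ∀ ε > (0 : ℝ), ∀ u v : E, ‖u‖ = 1 → ‖v‖ = 1 → ∃ T : E ≃ₗᵢ[𝕜] E, ‖T u - v‖ < ε)
    {ε : ℝ} (hε : 0 < ε) {x y : E} (hxy : ‖x‖ = ‖y‖) :
    ∃ T : E ≃ₗᵢ[𝕜] E, ‖T x - y‖ < ε := by
  rcases eq_or_ne x 0 with rfl | hx
  · refine ⟨LinearIsometryEquiv.refl 𝕜 E, ?_⟩
    simpa [← hxy] using hε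
  have hx' : 0 < ‖x‖ := norm_pos_iff.2 hx
  set c : 𝕜 := ((‖x‖⁻¹ : ℝ) : 𝕜)
  have hc : ‖c‖ = ‖x‖⁻¹ := by simp [c]
  have hunit : ∀ z : E, ‖z‖ = ‖x‖ → ‖c • z‖ = 1 := fun z hz => by
    rw [norm_smul, hc, hz, inv_mul_cancel₀ hx'.ne']
  obtain ⟨T, hT⟩ := h (ε / ‖x‖) (div_pos hε hx') (c • x) (c • y) (hunit x rfl) (hunit y hxy.symm)
  refine ⟨T, ?_⟩
  rwa [map_smul, ← smul_sub, norm_smul, hc, inv_mul_eq_div, div_lt_div_iff_of_pos_right hx'] at hT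

theorem stmt1_general (L : Type*) [TopologicalSpace L] :
    AlmostTransitiveC0 L ↔
      (AlmostPositiveTransitiveC0 L ∧ AdmitsAlmostPolarDecompositionsC0 L) := by
  refine ⟨fun h => ⟨fun ε hε f g hf hg _ _ => h ε hε f g hf hg, fun ε hε f =>
    exists_linearIsometryEquiv_norm_apply_sub_lt_of_norm_eq h hε (norm_absC0 f)⟩, ?_⟩
  rintro ⟨hpos, hpolar⟩ ε hε f g hf hg
  have habs_nonneg : ∀ (u : C₀(L, ℂ)) x, (absC0 u x).im = 0 ∧ 0 ≤ (absC0 u x).re := by simp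
  obtain ⟨T₁, hT₁⟩ := hpolar (ε / 3) (by positivity) f
  obtain ⟨T₂, hT₂⟩ := hpolar (ε / 3) (by positivity) g
  obtain ⟨S, hS⟩ := hpos (ε / 3) (by positivity) (absC0 f) (absC0 g)
    (by rw [norm_absC0, hf]) (by rw [norm_absC0, hg]) (habs_nonneg f) (habs_nonneg g)
  refine ⟨(T₁.symm.trans S).trans T₂, ?_⟩
  rw [← dist_eq_norm] at hT₁ hT₂ hS ⊢
  linarith [LinearIsometryEquiv.dist_trans_symm_trans_le T₁ S T₂ f (absC0 f) (absC0 g) g]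

theorem stmt1 (L : Type*) [TopologicalSpace L] [LocallyCompactSpace L] [T2Space L] :
    AlmostTransitiveC0 L ↔
      (AlmostPositiveTransitiveC0 L ∧ AdmitsAlmostPolarDecompositionsC0 L) :=
  stmt1_general L
end

section
/- Define F : [0,1] × [0,1] → [0,1] on pairs (a,b) with a ≤ b and b − a < 1/3 by F(a,b) = (a+b)/2 − ((b−a)/2)·((1 − b − a)/(1 − b)) if a + b ≤ 1, and F(a,b) = (a+b)/2 + ((b−a)/2)·((b + a − 1)/a) if a + b > 1. Then F is continuous on its domain and satisfies: F(0,b) = 0, F(a,1) = 1, and a ≤ F(a,b) ≤ b for all such pairs. -/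
/-- The auxiliary function from the proof of almost positive transitivity. -/
noncomputable def Fhat (a b : ℝ) : ℝ :=
  if a + b ≤ 1 then (a + b) / 2 - ((b - a) / 2) * ((1 - b - a) / (1 - b))
  else (a + b) / 2 + ((b - a) / 2) * ((b + a - 1) / a)

/-- The domain: pairs `(a,b)` in the unit square with `a ≤ b` and `b - a < 1/3`. -/
def FhatDomain : Set (ℝ × ℝ) :=
  {p | 0 ≤ p.1 ∧ p.2 ≤ 1 ∧ p.1 ≤ p.2 ∧ p.2 - p.1 < 1 / 3}

/-!
Both branches of `Fhat a b` have the form `(a + b)/2 + ((b - a)/2) * s` with `s ∈ [-1, 1]`,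
which puts the value between `a` and `b`, and both equal `1/2` on the line `a + b = 1`, so
they glue continuously. The only point of the closed triangle `0 ≤ a ≤ b ≤ 1` where the
relevant denominator vanishes is `(0, 1)`, which `b - a < 1/3` excludes.
-/

lemma midpoint_add_mul_mem_Icc {a b s : ℝ} (hab : a ≤ b) (hs : s ∈ Set.Icc (-1) 1) :
    (a + b) / 2 + (b - a) / 2 * s ∈ Set.Icc a b := by
  obtain ⟨hs₁, hs₂⟩ := hs
  constructor <;> nlinarith

lemma Fhat_mem_Icc {a b : ℝ} (ha : 0 ≤ a) (hab : a ≤ b) (hb : b ≤ 1) :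
    Fhat a b ∈ Set.Icc a b := by
  unfold Fhat
  split_ifs with h
  · rw [sub_eq_add_neg, ← mul_neg]
    refine midpoint_add_mul_mem_Icc hab ⟨?_, ?_⟩
    · exact neg_le_neg (div_le_one_of_le₀ (by linarith) (by linarith))
    · exact (neg_nonpos.mpr (div_nonneg (by linarith) (by linarith))).trans zero_le_one
  · refine midpoint_add_mul_mem_Icc hab ⟨?_, ?_⟩
    · exact neg_one_lt_zero.le.trans (div_nonneg (by linarith) ha)
    · exact div_le_one_of_le₀ (by linarith) ha

lemma Fhat_zero_left {b : ℝ} (hb : b < 1) : Fhat 0 b = 0 := by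
  rw [Fhat, if_pos (by linarith), sub_zero, sub_zero, div_self (by linarith : 1 - b ≠ 0)]
  ring

lemma Fhat_one_right {a : ℝ} (ha : 0 < a) : Fhat a 1 = 1 := by
  rw [Fhat, if_neg (by linarith), add_sub_cancel_left, div_self ha.ne']
  ring

lemma continuousOn_Fhat {s : Set (ℝ × ℝ)}
    (hleft : ∀ p ∈ s, p.1 + p.2 ≤ 1 → p.2 ≠ 1) (hright : ∀ p ∈ s, 1 ≤ p.1 + p.2 → p.1 ≠ 0) :
    ContinuousOn (fun p : ℝ × ℝ => Fhat p.1 p.2) s := by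
  have hsum : Continuous fun p : ℝ × ℝ => p.1 + p.2 := by fun_prop
  refine ContinuousOn.if ?_ ?_ ?_
  · intro p ⟨_, hp⟩
    have hp : p.1 + p.2 = 1 := frontier_le_subset_eq hsum continuous_const hp
    rw [show 1 - p.2 - p.1 = 0 by linarith, show p.2 + p.1 - 1 = 0 by linarith]
    simp
  · rw [closure_le_eq hsum continuous_const]
    exact ContinuousOn.sub (by fun_prop) (ContinuousOn.mul (by fun_prop) (ContinuousOn.div
      (by fun_prop) (by fun_prop) fun p hp => sub_ne_zero.mpr (hleft p hp.1 hp.2).symm))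
  · refine ContinuousOn.add (by fun_prop) (ContinuousOn.mul (by fun_prop) (ContinuousOn.div
      (by fun_prop) (by fun_prop) fun p hp => hright p hp.1 ?_))
    exact closure_lt_subset_le continuous_const hsum (by simpa only [not_le] using hp.2)

theorem stmt7 :
    ContinuousOn (fun p : ℝ × ℝ => Fhat p.1 p.2) FhatDomain ∧
    ∀ a b : ℝ, (a, b) ∈ FhatDomain →
      (a = 0 → Fhat a b = 0) ∧ (b = 1 → Fhat a b = 1) ∧
      a ≤ Fhat a b ∧ Fhat a b ≤ b := by
  refine ⟨continuousOn_Fhat ?_ ?_, ?_⟩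
  · rintro p ⟨-, -, -, hd⟩ hsum hb
    linarith
  · rintro p ⟨-, hb, -, hd⟩ hsum ha
    linarith
  · rintro a b ⟨ha, hb, hab, hd⟩
    refine ⟨?_, ?_, Fhat_mem_Icc ha hab hb⟩
    · rintro rfl
      exact Fhat_zero_left (by linarith)
    · rintro rfl
      exact Fhat_one_right (by linarith)
end

section
/- Let L be a locally compact Hausdorff space. If C₀(L, ℂ) is almost transitive, then L contains no isolated points unless L is a singleton. -/
open ZeroAtInfty Filter

lemma aux_zero_at_infty13 {L : Type*} [TopologicalSpace L] {f : L → ℂ} {K : Set L}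
    (hK : IsCompact K) (h : ∀ x ∉ K, f x = 0) :
    Tendsto f (cocompact L) (nhds 0) := by
  refine tendsto_const_nhds.congr' ?_
  filter_upwards [hK.compl_mem_cocompact] with x hx
  exact (h x hx).symm

lemma c0_norm_le13 {L : Type*} [TopologicalSpace L] (f : C₀(L, ℂ)) {c : ℝ} (hc : 0 ≤ c)
    (h : ∀ x, ‖f x‖ ≤ c) : ‖f‖ ≤ c := by
  rw [← ZeroAtInftyContinuousMap.norm_toBCF_eq_norm]
  exact (BoundedContinuousFunction.norm_le hc).mpr h


lemma c0_le_norm13 {L : Type*} [TopologicalSpace L] (f : C₀(L, ℂ)) (x : L) :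
    ‖f x‖ ≤ ‖f‖ := by
  rw [← ZeroAtInftyContinuousMap.norm_toBCF_eq_norm]
  exact BoundedContinuousFunction.norm_coe_le_norm f.toBCF x

set_option maxHeartbeats 1000000 in
/-- If `C₀(L, ℂ)` is almost transitive then `L` has no isolated points, unless
`L` is a singleton. -/
theorem stmt13 (L : Type*) [TopologicalSpace L] [LocallyCompactSpace L] [T2Space L]
    (hat : ∀ ε > (0 : ℝ), ∀ f g : C₀(L, ℂ), ‖f‖ = 1 → ‖g‖ = 1 →
      ∃ T : C₀(L, ℂ) ≃ₗᵢ[ℂ] C₀(L, ℂ), ‖T f - g‖ < ε) :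
    (∃ x : L, ∀ y : L, y = x) ∨ ∀ x : L, ¬ IsOpen ({x} : Set L) := by
  classical
  by_contra hcon
  push_neg at hcon
  obtain ⟨hns, p, hp⟩ := hcon
  obtain ⟨y, hy⟩ := hns p
  -- the indicator of the isolated point `p`
  have hpc : IsClosed ({p} : Set L) := isClosed_singleton
  have econt : Continuous (fun x : L => if x = p then (1 : ℂ) else 0) := by
    refine continuous_def.mpr fun s _ => ?_
    by_cases h1 : (1 : ℂ) ∈ s <;> by_cases h0 : (0 : ℂ) ∈ s
    · convert isOpen_univ using 1
      ext x
      simp only [Set.mem_preimage, Set.mem_univ, iff_true]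
      split <;> assumption
    · convert hp using 1
      ext x
      simp only [Set.mem_preimage, Set.mem_singleton_iff]
      split <;> simp_all
    · convert hpc.isOpen_compl using 1
      ext x
      simp only [Set.mem_preimage, Set.mem_compl_iff, Set.mem_singleton_iff]
      split <;> simp_all
    · convert isOpen_empty using 1
      ext x
      simp only [Set.mem_preimage, Set.mem_empty_iff_false, iff_false]
      split <;> simp_all
  let e : C₀(L, ℂ) :=
    ⟨⟨fun x => if x = p then (1 : ℂ) else 0, econt⟩,
      aux_zero_at_infty13 isCompact_singleton
        (fun x hx => if_neg (by simpa using hx))⟩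
  have he1 : e p = 1 := if_pos rfl
  have he0 : ∀ x, x ≠ p → e x = 0 := fun x hx => if_neg hx
  -- a bump at `y` avoiding `p`
  obtain ⟨b, hb1, hb0, hbc, hb01⟩ :=
    exists_continuous_one_zero_of_isCompact (isCompact_singleton (x := y))
      (isClosed_singleton (x := p)) (Set.disjoint_singleton.mpr hy)
  let f₂ : C₀(L, ℂ) :=
    ⟨⟨fun x => (b x : ℂ), Complex.continuous_ofReal.comp b.continuous⟩,
      aux_zero_at_infty13 hbc
        (fun x hx => by
          simp only [Complex.ofReal_eq_zero]
          exact image_eq_zero_of_notMem_tsupport hx)⟩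
  have hf2y : f₂ y = 1 := by
    show ((b y : ℂ)) = 1
    rw [hb1 rfl]
    norm_num
  have hf2p : f₂ p = 0 := by
    show ((b p : ℂ)) = 0
    rw [hb0 rfl]
    norm_num
  have hf2le : ∀ x, ‖f₂ x‖ ≤ 1 := by
    intro x
    show ‖((b x : ℂ))‖ ≤ 1
    rw [Complex.norm_real]
    have := hb01 x
    rw [Real.norm_eq_abs, abs_le]
    constructor <;> [linarith [this.1]; exact this.2]
  -- norms
  have hge : ∀ x, ‖e x‖ ≤ 1 := by
    intro x
    by_cases hx : x = p
    · subst hx; rw [he1]; norm_num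
    · rw [he0 x hx]; norm_num
  have hne : ‖e‖ = 1 := by
    refine le_antisymm (c0_norm_le13 e zero_le_one hge) ?_
    have := c0_le_norm13 e p
    rw [he1] at this
    simpa using this
  set g₀ : C₀(L, ℂ) := e + f₂ with hg₀
  set g : C₀(L, ℂ) := e - f₂ with hg
  have hg₀x : ∀ x, g₀ x = e x + f₂ x := fun x => rfl
  have hgx : ∀ x, g x = e x - f₂ x := fun x => rfl
  have hng₀ : ‖g₀‖ = 1 := by
    refine le_antisymm (c0_norm_le13 g₀ zero_le_one ?_) ?_
    · intro x
      rw [hg₀x]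
      by_cases hx : x = p
      · subst hx; rw [he1, hf2p]; norm_num
      · rw [he0 x hx, zero_add]; exact hf2le x
    · have := c0_le_norm13 g₀ p
      rw [hg₀x, he1, hf2p] at this
      simpa using this
  have hngle : ‖g‖ ≤ 1 := by
    refine c0_norm_le13 g zero_le_one fun x => ?_
    rw [hgx]
    by_cases hx : x = p
    · subst hx; rw [he1, hf2p]; norm_num
    · rw [he0 x hx, zero_sub, norm_neg]; exact hf2le x
  -- the key isometry-invariant property of `e`
  have keyP : ∀ h : C₀(L, ℂ), ‖h‖ ≤ 1 → 7/4 < ‖e + h‖ → ‖e - h‖ ≤ 1 := by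
    intro h hh hlt
    have hhx : ∀ x, ‖h x‖ ≤ 1 := fun x => (c0_le_norm13 h x).trans hh
    obtain ⟨x, hx⟩ : ∃ x, 7/4 < ‖(e + h) x‖ := by
      by_contra hc
      push_neg at hc
      exact absurd (c0_norm_le13 (e + h) (by norm_num) hc) (not_le.mpr hlt)
    have hax : (e + h) x = e x + h x := rfl
    rw [hax] at hx
    have hxp : x = p := by
      by_contra hxp
      rw [he0 x hxp, zero_add] at hx
      exact absurd (hhx x) (not_le.mpr (by linarith))
    rw [hxp, he1] at hx
    -- parallelogram law bounds `‖1 - h p‖`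
    have hpar := parallelogram_law_with_norm ℂ (1 : ℂ) (h p)
    have h1 : ‖(1 : ℂ)‖ = 1 := by norm_num
    have hb : ‖h p‖ ≤ 1 := hhx p
    have hnn : (0 : ℝ) ≤ ‖(1 : ℂ) - h p‖ := norm_nonneg _
    have hnn2 : (0 : ℝ) ≤ ‖(1 : ℂ) + h p‖ := norm_nonneg _
    have hkey : ‖(1 : ℂ) - h p‖ ≤ 1 := by nlinarith [norm_nonneg (h p)]
    refine c0_norm_le13 (e - h) zero_le_one fun z => ?_
    have : (e - h) z = e z - h z := rfl
    rw [this]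
    by_cases hz : z = p
    · subst hz; rw [he1]; exact hkey
    · rw [he0 z hz, zero_sub, norm_neg]; exact hhx z
  -- apply almost transitivity
  obtain ⟨T, hT⟩ := hat (1/4) (by norm_num) e g₀ hne hng₀
  -- `‖T e + g‖ > 7/4`
  have hsum : (7 : ℝ)/4 < ‖T e + g‖ := by
    have h2 : ‖g₀ + g‖ = 2 := by
      have hle : ‖g₀ + g‖ ≤ 2 := by
        refine c0_norm_le13 _ (by norm_num) fun x => ?_
        have : (g₀ + g) x = g₀ x + g x := rfl
        rw [this, hg₀x, hgx]
        calc ‖e x + f₂ x + (e x - f₂ x)‖ = ‖e x + e x‖ := by ring_nf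
          _ ≤ ‖e x‖ + ‖e x‖ := norm_add_le _ _
          _ ≤ 2 := by linarith [hge x]
      have hgeq : ‖g₀ + g‖ ≥ 2 := by
        have := c0_le_norm13 (g₀ + g) p
        have hval : (g₀ + g) p = g₀ p + g p := rfl
        rw [hval, hg₀x, hgx, he1, hf2p] at this
        norm_num at this
        linarith
      linarith
    have htri := norm_add_le (T e + g) (g₀ - T e)
    have heq : (T e + g) + (g₀ - T e) = g₀ + g := by abel
    rw [heq] at htri
    have hrev : ‖g₀ - T e‖ = ‖T e - g₀‖ := norm_sub_rev _ _
    rw [hrev] at htri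
    linarith
  -- invariance of the key property under `T`
  have hTle : ‖T e - g‖ ≤ 1 := by
    set g' := T.symm g with hg'
    have hng' : ‖g'‖ ≤ 1 := by rw [hg', T.symm.norm_map]; exact hngle
    have hTg' : T g' = g := T.apply_symm_apply g
    have hsum' : 7/4 < ‖e + g'‖ := by
      have : ‖T (e + g')‖ = ‖e + g'‖ := T.norm_map _
      rw [map_add, hTg'] at this
      linarith [hsum, this.symm.le]
    have := keyP g' hng' hsum'
    have hmap : ‖T (e - g')‖ = ‖e - g'‖ := T.norm_map _
    rw [map_sub, hTg'] at hmap
    linarith [hmap.le]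
  -- but `‖T e - g‖ ≥ 7/4`
  have hfar : (7 : ℝ)/4 ≤ ‖T e - g‖ := by
    have h2 : (2 : ℝ) ≤ ‖g₀ - g‖ := by
      have := c0_le_norm13 (g₀ - g) y
      have hval : (g₀ - g) y = g₀ y - g y := rfl
      rw [hval, hg₀x, hgx, he0 y hy, hf2y] at this
      norm_num at this
      linarith
    have htri := norm_add_le (T e - g) (g₀ - T e)
    have heq : (T e - g) + (g₀ - T e) = g₀ - g := by abel
    rw [heq] at htri
    have hrev : ‖g₀ - T e‖ = ‖T e - g₀‖ := norm_sub_rev _ _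
    rw [hrev] at htri
    linarith
  linarith
end
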